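/- Let M+1 be odd, w ∈ ℝ^{M+1} have components w_j = j/M − 1/2, P = w wᵀ/‖w‖², and L the skew-symmetric matrix with −1 above and 1 below the diagonal. Then the vectors v_o (ones in odd positions, zeros elsewhere) and v_e (ones in even positions, zeros elsewhere) form a basis of the kernel of (I − P)L, which is 2-dimensional. -/

import Mathlib

/-- The skew-symmetric matrix with `−1` above and `1` below the diagonal. -/
def Lmat (M : ℕ) : Matrix (Fin (M+1)) (Fin (M+1)) ℝ :=
  Matrix.of fun i j => if i < j then -1 else if j < i then 1 else 0

/-- The constraint vector `w` with `w_j = j/M − 1/2`. -/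
noncomputable def wvec (M : ℕ) : Fin (M+1) → ℝ :=
  fun j => (j : ℕ) / (M : ℝ) - 1/2

/-- The projection matrix `P = w wᵀ / ‖w‖²`. -/
noncomputable def Pmat (M : ℕ) : Matrix (Fin (M+1)) (Fin (M+1)) ℝ :=
  Matrix.of fun i j => wvec M i * wvec M j / (∑ k, wvec M k * wvec M k)

/-!
Since `w ≠ 0`, `(I − P)x = 0` exactly when `x ∈ ℝ w`, so the kernel consists of the `v` with
`L v = c w`. Consecutive entries of `L v` differ by `v_i + v_{i+1}`, while those of `w` differ
by `1/M`; hence `v_i + v_{i+1} = c/M` for all `i`, which forces `v` to alternate, i.e. to lie in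
`span {v_o, v_e}`. Conversely, for `v ∈ {v_o, v_e}` the entries of `L v` increase by `1`, and
`(L v)_0 + (L v)_M = v_0 − v_M = 0` because `M` is even, so `L v = M w`.
-/

open Matrix

section Projection

variable {K n : Type*} [Field K] [Fintype n]

lemma rankOneProjection_mulVec (w x : n → K) :
    (of fun i j => w i * w j / (w ⬝ᵥ w)) *ᵥ x = (w ⬝ᵥ x / (w ⬝ᵥ w)) • w := by
  ext i
  simp only [mulVec, dotProduct, of_apply, Pi.smul_apply, smul_eq_mul, Finset.sum_div,
    Finset.sum_mul]
  exact Finset.sum_congr rfl fun j _ => by ring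

lemma one_sub_rankOneProjection_mulVec_eq_zero_iff [DecidableEq n] {w : n → K}
    (hw : w ⬝ᵥ w ≠ 0) (x : n → K) :
    (1 - of fun i j => w i * w j / (w ⬝ᵥ w)) *ᵥ x = 0 ↔ ∃ c : K, x = c • w := by
  rw [sub_mulVec, one_mulVec, rankOneProjection_mulVec, sub_eq_zero]
  refine ⟨fun h => ⟨_, h⟩, ?_⟩
  rintro ⟨c, rfl⟩
  rw [dotProduct_smul, smul_eq_mul, mul_div_cancel_right₀ _ hw]

end Projection

lemma Lmat_mulVec_succ_sub_castSucc (M : ℕ) (v : Fin (M+1) → ℝ) (i : Fin M) :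
    (Lmat M *ᵥ v) i.succ - (Lmat M *ᵥ v) i.castSucc = v i.castSucc + v i.succ := by
  have hrow : ∀ j, Lmat M i.succ j - Lmat M i.castSucc j
      = (if j = i.castSucc then 1 else 0) + (if j = i.succ then 1 else 0) := by
    intro j
    simp only [Lmat, of_apply, Fin.lt_def, Fin.ext_iff, Fin.val_succ, Fin.val_castSucc]
    grind
  simp only [mulVec, dotProduct, ← Finset.sum_sub_distrib, ← sub_mul, hrow, add_mul, ite_mul,
    one_mul, zero_mul, Finset.sum_add_distrib, Finset.sum_ite_eq', Finset.mem_univ, if_true]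

lemma Lmat_mulVec_zero_add_last (M : ℕ) (v : Fin (M+1) → ℝ) :
    (Lmat M *ᵥ v) 0 + (Lmat M *ᵥ v) (Fin.last M) = v 0 - v (Fin.last M) := by
  have hrow : ∀ j, Lmat M 0 j + Lmat M (Fin.last M) j
      = (if j = 0 then 1 else 0) - (if j = Fin.last M then 1 else 0) := by
    intro j
    obtain ⟨j, hj⟩ := j
    simp only [Lmat, of_apply, Fin.lt_def, Fin.ext_iff, Fin.val_last, Fin.val_zero]
    grind
  simp only [mulVec, dotProduct, ← Finset.sum_add_distrib, ← add_mul, hrow, sub_mul, ite_mul,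
    one_mul, zero_mul, Finset.sum_sub_distrib, Finset.sum_ite_eq', Finset.mem_univ, if_true]

lemma mul_wvec {M : ℕ} (hM : M ≠ 0) (i : Fin (M+1)) : (M : ℝ) * wvec M i = i - M / 2 := by
  rw [wvec]
  field_simp

lemma wvec_succ_sub_castSucc (M : ℕ) (i : Fin M) :
    wvec M i.succ - wvec M i.castSucc = 1 / M := by
  simp only [wvec, Fin.val_succ, Fin.val_castSucc, Nat.cast_add, Nat.cast_one]
  ring

lemma wvec_dotProduct_self_ne_zero (M : ℕ) : wvec M ⬝ᵥ wvec M ≠ 0 := by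
  refine (Finset.sum_pos' (fun k _ => mul_self_nonneg _) ⟨0, Finset.mem_univ _, ?_⟩).ne'
  norm_num [wvec]

section FinRecurrence

variable {R : Type*} [CommRing R] {M : ℕ}

lemma eq_add_mul_of_succ_sub_castSucc {u : Fin (M+1) → R} {d : R}
    (h : ∀ i : Fin M, u i.succ - u i.castSucc = d) (i : Fin (M+1)) : u i = u 0 + i * d := by
  induction i using Fin.induction with
  | zero => simp
  | succ i ih =>
    rw [← sub_add_cancel (u i.succ) (u i.castSucc), h i, ih, Fin.val_succ, Fin.val_castSucc]
    push_cast
    ring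

lemma eq_ite_even_of_castSucc_add_succ {v : Fin (M+1) → R} {a : R}
    (h : ∀ i : Fin M, v i.castSucc + v i.succ = a) (i : Fin (M+1)) :
    v i = if Even (i : ℕ) then v 0 else a - v 0 := by
  induction i using Fin.induction with
  | zero => simp
  | succ i ih =>
    rw [eq_sub_of_add_eq' (h i), ih]
    simp only [Fin.val_succ, Fin.val_castSucc, Nat.even_add_one]
    split_ifs <;> ring

end FinRecurrence

lemma Lmat_mulVec_eq_of_castSucc_add_succ {M : ℕ} (hM : M ≠ 0) {v : Fin (M+1) → ℝ}
    (hsum : ∀ i : Fin M, v i.castSucc + v i.succ = 1) (hends : v 0 = v (Fin.last M)) :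
    Lmat M *ᵥ v = (M : ℝ) • wvec M := by
  have hlin : ∀ i, (Lmat M *ᵥ v) i = (Lmat M *ᵥ v) 0 + i := by
    simpa using eq_add_mul_of_succ_sub_castSucc
      fun i => (Lmat_mulVec_succ_sub_castSucc M v i).trans (hsum i)
  have hzero : (Lmat M *ᵥ v) 0 = -M / 2 := by
    have := Lmat_mulVec_zero_add_last M v
    rw [hends, sub_self, hlin (Fin.last M), Fin.val_last] at this
    linarith
  ext i
  rw [Pi.smul_apply, smul_eq_mul, mul_wvec hM, hlin, hzero]
  ring

def vOdd (n : ℕ) : Fin n → ℝ := fun i => if Odd (i : ℕ) then 1 else 0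

def vEven (n : ℕ) : Fin n → ℝ := fun i => if Even (i : ℕ) then 1 else 0

lemma vOdd_castSucc_add_succ {M : ℕ} (i : Fin M) :
    vOdd (M+1) i.castSucc + vOdd (M+1) i.succ = 1 := by
  simp only [vOdd, Fin.val_castSucc, Fin.val_succ, Nat.odd_add_one]
  split_ifs <;> norm_num

lemma vEven_castSucc_add_succ {M : ℕ} (i : Fin M) :
    vEven (M+1) i.castSucc + vEven (M+1) i.succ = 1 := by
  simp only [vEven, Fin.val_castSucc, Fin.val_succ, Nat.even_add_one]
  split_ifs <;> norm_num

lemma vOdd_zero_eq_last {M : ℕ} (hM : Even M) : vOdd (M+1) 0 = vOdd (M+1) (Fin.last M) := by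
  simp [vOdd, Nat.not_odd_iff_even.mpr hM]

lemma vEven_zero_eq_last {M : ℕ} (hM : Even M) : vEven (M+1) 0 = vEven (M+1) (Fin.last M) := by
  simp [vEven, hM]

lemma mem_span_vOdd_vEven_of_castSucc_add_succ {M : ℕ} {v : Fin (M+1) → ℝ} {a : ℝ}
    (h : ∀ i : Fin M, v i.castSucc + v i.succ = a) :
    v ∈ Submodule.span ℝ {vOdd (M+1), vEven (M+1)} := by
  refine Submodule.mem_span_pair.mpr ⟨a - v 0, v 0, funext fun i => ?_⟩
  rw [eq_ite_even_of_castSucc_add_succ h i]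
  simp only [vOdd, vEven, Pi.add_apply, Pi.smul_apply, smul_eq_mul, ← Nat.not_even_iff_odd]
  split_ifs <;> ring

lemma linearIndependent_vOdd_vEven {n : ℕ} (hn : 1 < n) :
    LinearIndependent ℝ ![vOdd n, vEven n] := by
  refine LinearIndependent.pair_iff.mpr fun s t hst => ?_
  have h0 := congrFun hst ⟨0, by omega⟩
  have h1 := congrFun hst ⟨1, hn⟩
  norm_num [vOdd, vEven] at h0 h1
  exact ⟨h1, h0⟩

lemma mem_ker_iff_exists_Lmat_mulVec_eq_smul_wvec (M : ℕ) (v : Fin (M+1) → ℝ) :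
    v ∈ LinearMap.ker ((1 - Pmat M) * Lmat M).mulVecLin ↔ ∃ c : ℝ, Lmat M *ᵥ v = c • wvec M := by
  rw [LinearMap.mem_ker, mulVecLin_apply, ← mulVec_mulVec]
  exact one_sub_rankOneProjection_mulVec_eq_zero_iff (wvec_dotProduct_self_ne_zero M) _

/-- For `M+1` odd, the vectors with ones in odd resp. even positions form a
basis of the kernel of `(I − P)L`. -/
theorem stmt18 (M : ℕ) (hM : 0 < M) (hodd : Odd (M + 1)) :
    LinearMap.ker ((1 - Pmat M) * Lmat M).mulVecLin
      = Submodule.span ℝ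
          {(fun i : Fin (M+1) => if Odd (i : ℕ) then (1:ℝ) else 0),
           (fun i : Fin (M+1) => if Even (i : ℕ) then (1:ℝ) else 0)} ∧
    LinearIndependent ℝ
      ![(fun i : Fin (M+1) => if Odd (i : ℕ) then (1:ℝ) else 0),
        (fun i : Fin (M+1) => if Even (i : ℕ) then (1:ℝ) else 0)] := by
  change LinearMap.ker _ = Submodule.span ℝ {vOdd (M+1), vEven (M+1)} ∧
    LinearIndependent ℝ ![vOdd (M+1), vEven (M+1)]
  have hMe : Even M := by simpa [Nat.odd_add_one] using hodd
  have hL : ∀ {v}, (∀ i : Fin M, v i.castSucc + v i.succ = 1) → v 0 = v (Fin.last M) →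
      v ∈ LinearMap.ker ((1 - Pmat M) * Lmat M).mulVecLin := fun hsum hends =>
    (mem_ker_iff_exists_Lmat_mulVec_eq_smul_wvec M _).mpr
      ⟨M, Lmat_mulVec_eq_of_castSucc_add_succ hM.ne' hsum hends⟩
  refine ⟨le_antisymm (fun v hv => ?_) ?_, linearIndependent_vOdd_vEven (by omega)⟩
  · obtain ⟨c, hc⟩ := (mem_ker_iff_exists_Lmat_mulVec_eq_smul_wvec M v).mp hv
    refine mem_span_vOdd_vEven_of_castSucc_add_succ (a := c / M) fun i => ?_
    rw [← Lmat_mulVec_succ_sub_castSucc, hc, Pi.smul_apply, Pi.smul_apply, ← smul_sub,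
      wvec_succ_sub_castSucc, smul_eq_mul, mul_one_div]
  · rw [Submodule.span_le, Set.insert_subset_iff, Set.singleton_subset_iff]
    exact ⟨hL vOdd_castSucc_add_succ (vOdd_zero_eq_last hMe),
      hL vEven_castSucc_add_succ (vEven_zero_eq_last hMe)⟩
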